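/- arXiv:2212.02799 — 2 statements merged into one kernel-verified Lean document; each statement's English description precedes it below -/
import Mathlib

section
/- Let A be a 3×3 complex symmetric matrix such that A∘(B∘C) = (A∘B)∘C + B∘(A∘C) for all symmetric B, C (i.e. multiplication by A is a Jordan derivation). Then A = 0. -/
open Matrix

/-- Jordan product on 3×3 complex matrices. -/
noncomputable def jmul (A B : Matrix (Fin 3) (Fin 3) ℂ) : Matrix (Fin 3) (Fin 3) ℂ :=
  (1/2 : ℂ) • (A * B + B * A)

lemma jmul_one (A : Matrix (Fin 3) (Fin 3) ℂ) : jmul A 1 = A := by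
  simp [jmul, two_smul]
  module

lemma jmul_one' (A : Matrix (Fin 3) (Fin 3) ℂ) : jmul 1 A = A := by
  simp [jmul, two_smul]
  module

/-- if Jordan multiplication by a symmetric `A` is a Jordan derivation
on symmetric matrices, then `A = 0`. -/
theorem stmt_5 (A : Matrix (Fin 3) (Fin 3) ℂ) (hA : A.IsSymm)
    (h : ∀ B C : Matrix (Fin 3) (Fin 3) ℂ, B.IsSymm → C.IsSymm →
      jmul A (jmul B C) = jmul (jmul A B) C + jmul B (jmul A C)) :
    A = 0 := by
  have h1 := h 1 1 Matrix.isSymm_one Matrix.isSymm_one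
  rw [jmul_one, jmul_one, jmul_one, jmul_one'] at h1
  have : A + A - A = A + A - (A + A) := by rw [← h1]
  simpa using this
end

section
/- Let A be a 3×3 complex symmetric traceless matrix such that for all diagonal traceless B and all diagonal C one has ABC + CBA − BAC − CAB = 0. Then A is diagonal, hence A = diag(r₁,r₂,r₃) with r₁+r₂+r₃ = 0. -/
open Matrix

/-! The hypothesis says that `[[A, B], C] = 0`, and for diagonal `B = diag b`, `C = diag c` the
`(i, j)` entry of this double commutator is `(bᵢ - bⱼ)(cᵢ - cⱼ) Aᵢⱼ`. Taking `B = C = diag(1, 0, -1)`,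
whose entries are distinct, kills every off-diagonal entry of `A`. -/

namespace Matrix

variable {n R : Type*} [Fintype n] [DecidableEq n]

theorem lie_lie_diagonal_apply [CommRing R] (A : Matrix n n R) (b c : n → R) (i j : n) :
    ⁅⁅A, diagonal b⁆, diagonal c⁆ i j = (b i - b j) * (c i - c j) * A i j := by
  simp only [Ring.lie_def, sub_apply, mul_diagonal, diagonal_mul]
  ring

theorem isDiag_of_lie_lie_diagonal_eq_zero [CommRing R] [IsDomain R] {A : Matrix n n R}
    {b : n → R} (hb : Function.Injective b) (h : ⁅⁅A, diagonal b⁆, diagonal b⁆ = 0) :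
    A.IsDiag := by
  intro i j hij
  have hentry := lie_lie_diagonal_apply A b b i j
  rw [h, zero_apply, eq_comm] at hentry
  have hbij : b i - b j ≠ 0 := sub_ne_zero.mpr (hb.ne hij)
  simpa [hbij] using hentry

end Matrix

theorem stmt_9_general (A : Matrix (Fin 3) (Fin 3) ℂ) (htr : A.trace = 0)
    (h : ∀ b c : Fin 3 → ℂ, b 0 + b 1 + b 2 = 0 →
      A * diagonal b * diagonal c + diagonal c * diagonal b * A
        - diagonal b * A * diagonal c - diagonal c * A * diagonal b = 0) :
    ∃ r : Fin 3 → ℂ, A = diagonal r ∧ r 0 + r 1 + r 2 = 0 := by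
  set b : Fin 3 → ℂ := ![1, 0, -1]
  have hb : Function.Injective b := by
    intro i j hij
    fin_cases i <;> fin_cases j <;> simp [b] at hij ⊢ <;> norm_num at hij
  have hcomm : ⁅⁅A, diagonal b⁆, diagonal b⁆ = 0 := by
    rw [← h b b (by simp [b])]
    simp only [Ring.lie_def, sub_mul, mul_sub, Matrix.mul_assoc]
    abel
  refine ⟨diag A, (isDiag_of_lie_lie_diagonal_eq_zero hb hcomm).diagonal_diag.symm, ?_⟩
  simpa [trace, Fin.sum_univ_three] using htr

/-- if `A` is symmetric traceless and `ABC + CBA − BAC − CAB = 0` for all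
diagonal traceless `B` and all diagonal `C`, then `A` is diagonal,
`A = diag(r₁,r₂,r₃)` with `r₁+r₂+r₃ = 0`. -/
theorem stmt_9 (A : Matrix (Fin 3) (Fin 3) ℂ) (hA : A.IsSymm) (htr : A.trace = 0)
    (h : ∀ b c : Fin 3 → ℂ, b 0 + b 1 + b 2 = 0 →
      A * diagonal b * diagonal c + diagonal c * diagonal b * A
        - diagonal b * A * diagonal c - diagonal c * A * diagonal b = 0) :
    ∃ r : Fin 3 → ℂ, A = diagonal r ∧ r 0 + r 1 + r 2 = 0 :=
  stmt_9_general A htr h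
end
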